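/- Let (W,S) be a Coxeter system, τ, φ ∈ W, and W₁, W₂ standard parabolic subgroups of W. Let s ∈ S be such that sφ < φ in the Bruhat order and brmin(sτW₁) ≤ brmin(τW₁). Then the unique minimal element of W₁ I(τ⁻¹) φ W₂ = { a x φ b : a ∈ W₁, x ≤ τ⁻¹, b ∈ W₂ } equals the unique minimal element of W₁ I(τ⁻¹) sφ W₂ = { a x (sφ) b : a ∈ W₁, x ≤ τ⁻¹, b ∈ W₂ }. (Both minimal elements exist.) -/

import Mathlib

variable {B W : Type*} [Group W] {M : CoxeterMatrix B}

/-- The (strong) Bruhat order on the Coxeter group `W`: `u ≤ v` if and only if some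
reduced word for `v` admits a sublist whose product is `u`. -/
def BruhatLE (cs : CoxeterSystem M W) (u v : W) : Prop :=
  ∃ ω : List B, cs.IsReduced ω ∧ cs.wordProd ω = v ∧
    ∃ ω' : List B, ω'.Sublist ω ∧ cs.wordProd ω' = u

/-- The strict Bruhat order. -/
def BruhatLT (cs : CoxeterSystem M W) (u v : W) : Prop :=
  BruhatLE cs u v ∧ u ≠ v

/-- `m` is the unique minimal element of `K` in the Bruhat order, i.e. `m ∈ K` and
`m` is Bruhat-below every element of `K`. -/
def IsBrMin (cs : CoxeterSystem M W) (K : Set W) (m : W) : Prop :=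
  m ∈ K ∧ ∀ x ∈ K, BruhatLE cs m x

/-- `m` is the unique maximal element of `K` in the Bruhat order, i.e. `m ∈ K` and
`m` is Bruhat-above every element of `K`. -/
def IsBrMax (cs : CoxeterSystem M W) (K : Set W) (m : W) : Prop :=
  m ∈ K ∧ ∀ x ∈ K, BruhatLE cs x m

/-- A standard parabolic subgroup: a subgroup generated by a subset of the simple
reflections. -/
def IsStdParabolic (cs : CoxeterSystem M W) (P : Subgroup W) : Prop :=
  ∃ X : Set B, P = Subgroup.closure (cs.simple '' X)

/-- The left coset `u•W₁ = {u * b : b ∈ W₁}`. -/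
def lCoset (W₁ : Subgroup W) (u : W) : Set W := {x | ∃ b ∈ W₁, x = u * b}

/-- The double coset `W₁ u W₂ = {a * u * b : a ∈ W₁, b ∈ W₂}`. -/
def dblCoset (W₁ W₂ : Subgroup W) (u : W) : Set W :=
  {x | ∃ a ∈ W₁, ∃ b ∈ W₂, x = a * u * b}

/-- The set `W₁ I(τ⁻¹) φ W₂ = { a x φ b : a ∈ W₁, x ≤ τ⁻¹, b ∈ W₂ }`. -/
def KKset (cs : CoxeterSystem M W) (W₁ W₂ : Subgroup W) (τ φ : W) : Set W :=
  {z | ∃ a ∈ W₁, ∃ x, BruhatLE cs x τ⁻¹ ∧ ∃ b ∈ W₂, z = a * x * φ * b}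

/-!
Write `m₂ = brmin(τW₁)` and `m₁ = brmin(sτW₁)`. If `sm₂ > m₂`, then `m₁ ≤ sm₂` and
`m₂ ≤ sm₁` together with `m₁ ≤ m₂` force `m₁ = m₂`, so `sm₂ ∈ τW₁`. In either case the lifting
property and `I(m c) ⊆ I(m) W₁` for `c ∈ W₁` give `s I(τ) ⊆ I(τ) W₁`, i.e.
`I(τ⁻¹) s ⊆ W₁ I(τ⁻¹)`. Hence `W₁ I(τ⁻¹) φ W₂ = W₁ I(τ⁻¹) sφ W₂`, and it remains to find the
minimum of such a set: `I(u)ψ` has a minimum `xψ` (induction on `u`, by the lifting property),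
and the minimum of the double coset `W₁ xψ W₂` lies below every element of `W₁ I(u) ψ W₂`.

The Bruhat order facts used (transitivity, the subword property for every word, the lifting
property) are derived from the strong exchange property, via the chain definition of the order.
Strong exchange itself comes from Tits' reflection cocycle: the parity of the number of times a
reflection occurs in the right inversion sequence of a word depends only on its product.
-/

namespace CoxeterSystem

open List

variable (cs : CoxeterSystem M W)

local prefix:100 "s" => cs.simple
local prefix:100 "π" => cs.wordProd
local prefix:100 "ℓ" => cs.length
local prefix:100 "ris " => cs.rightInvSeq

theorem inv_simple_mul_simple (i j : B) : (s i * s j)⁻¹ = s j * s i := by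
  simp [cs.inv_simple]

section ReflectionCocycle

variable [DecidableEq W]

/-- Tits' action of `s i` on pairs `(t, ε)` of a reflection and a sign in `ZMod 2`. -/
def reflectionAction (i : B) : Function.End (W × ZMod 2) :=
  fun p => (s i * p.1 * s i, p.2 + if p.1 = s i then 1 else 0)

theorem reflectionAction_mul_apply (i j : B) (p : W × ZMod 2) :
    (cs.reflectionAction i * cs.reflectionAction j) p =
      (s i * s j * p.1 * (s i * s j)⁻¹, p.2 + ((if p.1 = s j then 1 else 0) +
        if p.1 = s j * s i * s j then 1 else 0)) := by
  have hconj : s j * p.1 * s j = s i ↔ p.1 = s j * s i * s j := by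
    constructor <;> intro h
    · simp [← h, mul_assoc, cs.simple_mul_simple_cancel_left]
    · simp [h, mul_assoc, cs.simple_mul_simple_cancel_left]
  show cs.reflectionAction i (cs.reflectionAction j p) = _
  refine Prod.ext ?_ ?_
  · simp [reflectionAction, cs.inv_simple_mul_simple, mul_assoc]
  · simp only [reflectionAction, hconj, add_assoc]

theorem reflectionAction_mul_pow_apply (i j : B) (k : ℕ) (p : W × ZMod 2) :
    ((cs.reflectionAction i * cs.reflectionAction j) ^ k) p =
      ((s i * s j) ^ k * p.1 * ((s i * s j) ^ k)⁻¹,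
        p.2 + ∑ n ∈ Finset.range (2 * k), if p.1 = (s j * s i) ^ n * s j then 1 else 0) := by
  induction k generalizing p with
  | zero => simp; rfl
  | succ k ih =>
    have hconj (n : ℕ) : s i * s j * p.1 * (s i * s j)⁻¹ = (s j * s i) ^ n * s j ↔
        p.1 = (s j * s i) ^ (n + 2) * s j := by
      rw [mul_inv_eq_iff_eq_mul, ← eq_inv_mul_iff_mul_eq, cs.inv_simple_mul_simple]
      suffices s j * s i * ((s j * s i) ^ n * s j * (s i * s j)) = (s j * s i) ^ (n + 2) * s j by
        rw [this]
      calc _ = (s j * s i) * (s j * s i) ^ n * (s j * s i) * s j := by simp only [mul_assoc]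
        _ = _ := by rw [← pow_succ', ← pow_succ]
    rw [pow_succ]
    change ((cs.reflectionAction i * cs.reflectionAction j) ^ k)
      ((cs.reflectionAction i * cs.reflectionAction j) p) = _
    rw [cs.reflectionAction_mul_apply, ih]
    refine Prod.ext ?_ ?_
    · simp [pow_succ, mul_assoc]
    · simp only [hconj, show 2 * (k + 1) = 2 * k + 1 + 1 by ring, Finset.sum_range_succ']
      simp only [zero_add, pow_zero, one_mul, pow_one]
      ring

theorem reflectionAction_isLiftable : M.IsLiftable cs.reflectionAction := by
  intro i j
  funext p
  rw [cs.reflectionAction_mul_pow_apply, cs.simple_mul_simple_pow, two_mul,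
    Finset.sum_range_add]
  simp only [pow_add, cs.simple_mul_simple_pow', one_mul, inv_one, mul_one,
    CharTwo.add_self_eq_zero, add_zero]
  rfl

def reflectionRep : W →* Function.End (W × ZMod 2) :=
  cs.lift ⟨cs.reflectionAction, cs.reflectionAction_isLiftable⟩

theorem reflectionRep_simple (i : B) : cs.reflectionRep (s i) = cs.reflectionAction i :=
  cs.lift_apply_simple cs.reflectionAction_isLiftable i

theorem reflectionRep_wordProd (ω : List B) (p : W × ZMod 2) :
    cs.reflectionRep (π ω) p = (π ω * p.1 * (π ω)⁻¹, p.2 + (ris ω).count p.1) := by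
  induction ω generalizing p with
  | nil => simp; rfl
  | cons i ω ih =>
    have hconj : π ω * p.1 * (π ω)⁻¹ = s i ↔ (π ω)⁻¹ * s i * π ω = p.1 := by
      rw [mul_inv_eq_iff_eq_mul, ← eq_inv_mul_iff_mul_eq, eq_comm, mul_assoc]
    rw [cs.wordProd_cons, map_mul, reflectionRep_simple]
    change cs.reflectionAction i (cs.reflectionRep (π ω) p) = _
    rw [ih, rightInvSeq, count_cons]
    refine Prod.ext ?_ ?_
    · simp [reflectionAction, mul_assoc, cs.inv_simple]
    · simp only [reflectionAction, hconj, beq_iff_eq, Nat.cast_add, Nat.cast_ite, Nat.cast_one,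
        Nat.cast_zero, add_assoc]

/-- The parity of the number of occurrences of `t` in the right inversion sequence of any word
for `w`. -/
def reflectionCocycle (w t : W) : ZMod 2 := (cs.reflectionRep w (t, 0)).2

theorem reflectionCocycle_wordProd (ω : List B) (t : W) :
    cs.reflectionCocycle (π ω) t = (ris ω).count t := by
  simp [reflectionCocycle, reflectionRep_wordProd]

theorem reflectionRep_apply (w : W) (p : W × ZMod 2) :
    cs.reflectionRep w p = (w * p.1 * w⁻¹, p.2 + cs.reflectionCocycle w p.1) := by
  obtain ⟨ω, rfl⟩ := cs.wordProd_surjective w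
  rw [reflectionRep_wordProd, reflectionCocycle_wordProd]

theorem reflectionCocycle_mul (u v t : W) :
    cs.reflectionCocycle (u * v) t =
      cs.reflectionCocycle v t + cs.reflectionCocycle u (v * t * v⁻¹) := by
  rw [reflectionCocycle, map_mul]
  change (cs.reflectionRep u (cs.reflectionRep v (t, 0))).2 = _
  simp [reflectionRep_apply]

theorem reflectionCocycle_one (t : W) : cs.reflectionCocycle 1 t = 0 := by
  simpa using cs.reflectionCocycle_wordProd [] t

theorem reflectionCocycle_simple (i : B) (t : W) :
    cs.reflectionCocycle (s i) t = if t = s i then 1 else 0 := by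
  simp [reflectionCocycle, reflectionRep_simple, reflectionAction]

theorem reflectionCocycle_inv (w t : W) :
    cs.reflectionCocycle w⁻¹ (w * t * w⁻¹) = cs.reflectionCocycle w t := by
  have h := cs.reflectionCocycle_mul w⁻¹ w t
  rw [inv_mul_cancel, reflectionCocycle_one, eq_comm, CharTwo.add_eq_zero] at h
  exact h.symm

theorem reflectionCocycle_self {t : W} (ht : cs.IsReflection t) :
    cs.reflectionCocycle t t = 1 := by
  obtain ⟨w, i, rfl⟩ := ht
  have h₁ := cs.reflectionCocycle_mul (w * s i) w⁻¹ (w * s i * w⁻¹)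
  rw [show w⁻¹ * (w * s i * w⁻¹) * w⁻¹⁻¹ = s i by group] at h₁
  have h₂ := cs.reflectionCocycle_mul w (s i) (s i)
  rw [show s i * s i * (s i)⁻¹ = s i by group] at h₂
  rw [h₁, h₂, cs.reflectionCocycle_inv, cs.reflectionCocycle_simple, if_pos rfl, add_left_comm,
    CharTwo.add_self_eq_zero, add_zero]

theorem mem_rightInvSeq_of_reflectionCocycle_ne_zero {ω : List B} {t : W}
    (h : cs.reflectionCocycle (π ω) t ≠ 0) : t ∈ ris ω := by
  rw [reflectionCocycle_wordProd] at h
  exact count_pos_iff.mp (Nat.pos_of_ne_zero fun h0 => h (by rw [h0, Nat.cast_zero]))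

theorem length_mul_lt_of_reflectionCocycle_ne_zero {w t : W}
    (h : cs.reflectionCocycle w t ≠ 0) : ℓ (w * t) < ℓ w := by
  obtain ⟨ω, hω, rfl⟩ := cs.exists_isReduced w
  exact (cs.isRightInversion_of_mem_rightInvSeq hω
    (cs.mem_rightInvSeq_of_reflectionCocycle_ne_zero h)).2

theorem reflectionCocycle_ne_zero_of_length_mul_lt {w t : W} (ht : cs.IsReflection t)
    (h : ℓ (w * t) < ℓ w) : cs.reflectionCocycle w t ≠ 0 := by
  intro h0
  have h₁ : cs.reflectionCocycle (w * t) t ≠ 0 := by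
    rw [reflectionCocycle_mul, cs.reflectionCocycle_self ht,
      show t * t * t⁻¹ = t by group, h0, add_zero]
    exact one_ne_zero
  have h₂ := cs.length_mul_lt_of_reflectionCocycle_ne_zero h₁
  rw [mul_assoc, ht.mul_self, mul_one] at h₂
  exact h.not_gt h₂

end ReflectionCocycle

/-- The strong exchange property, for an arbitrary (not necessarily reduced) word. -/
theorem exists_wordProd_eraseIdx_eq_mul {ω : List B} {t : W} (ht : cs.IsReflection t)
    (h : ℓ (π ω * t) < ℓ (π ω)) : ∃ j < ω.length, π (ω.eraseIdx j) = π ω * t := by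
  classical
  obtain ⟨j, hj, hget⟩ := mem_iff_getElem.mp <| cs.mem_rightInvSeq_of_reflectionCocycle_ne_zero
    (cs.reflectionCocycle_ne_zero_of_length_mul_lt ht h)
  refine ⟨j, by rwa [← cs.length_rightInvSeq], ?_⟩
  rw [← cs.wordProd_mul_getD_rightInvSeq, getD_eq_getElem _ _ hj, hget]

def BruhatStep (u v : W) : Prop := ∃ t, cs.IsReflection t ∧ v = u * t ∧ ℓ u < ℓ v

/-- The Bruhat order as originally defined, by chains of reflections. -/
def ChainLE : W → W → Prop := Relation.ReflTransGen cs.BruhatStep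

def ChainLifting (v : W) : Prop :=
  ∀ u i, cs.ChainLE u v →
    (¬cs.IsLeftDescent v i → cs.ChainLE (s i * u) (s i * v)) ∧
    (cs.IsLeftDescent v i → cs.ChainLE (s i * u) v)

variable {cs}

theorem BruhatStep.simple_mul {u v : W} {i : B} (h : cs.BruhatStep u v)
    (hv : ¬cs.IsLeftDescent v i) : cs.BruhatStep (s i * u) (s i * v) := by
  obtain ⟨t, ht, rfl, hlt⟩ := h
  refine ⟨t, ht, (mul_assoc _ _ _).symm, ?_⟩
  have := cs.length_simple_mul u i
  rw [cs.not_isLeftDescent_iff] at hv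
  omega

theorem ChainLE.exists_sublist {u v : W} (h : cs.ChainLE u v) :
    ∀ {ω : List B}, π ω = v → ∃ ω', ω' <+ ω ∧ π ω' = u := by
  induction h with
  | refl => exact fun {ω} hω => ⟨ω, Sublist.refl ω, hω⟩
  | tail _ hstep ih =>
    rintro ω rfl
    obtain ⟨t, ht, hω, hlt⟩ := hstep
    have hdesc : ℓ (π ω * t) < ℓ (π ω) := by rwa [hω, mul_assoc, ht.mul_self, mul_one, ← hω]
    obtain ⟨j, -, hj⟩ := cs.exists_wordProd_eraseIdx_eq_mul ht hdesc
    obtain ⟨ω', hω', rfl⟩ := ih (by rw [hj, hω, mul_assoc, ht.mul_self, mul_one])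
    exact ⟨ω', hω'.trans (eraseIdx_sublist ω j), rfl⟩

variable (cs)

theorem chainLE_simple_mul {w : W} {i : B} (hw : ¬cs.IsLeftDescent w i) :
    cs.ChainLE w (s i * w) := by
  refine .single ⟨w⁻¹ * s i * w, ?_, by group, ?_⟩
  · simpa using (cs.isReflection_simple i).conj w⁻¹
  · rw [cs.not_isLeftDescent_iff] at hw
    omega

theorem exists_isReduced_cons_of_isLeftDescent {v : W} {i : B} (hv : cs.IsLeftDescent v i) :
    ∃ κ, cs.IsReduced (i :: κ) ∧ π κ = s i * v := by
  obtain ⟨κ, hκ, hκv⟩ := cs.exists_isReduced (s i * v)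
  refine ⟨κ, ?_, hκv.symm⟩
  have := cs.isLeftDescent_iff.mp hv
  rw [IsReduced, wordProd_cons, ← hκv, cs.simple_mul_simple_cancel_left, length_cons, ← hκ.eq,
    ← hκv]
  omega

/- The subword property `chainLE_of_sublist` and the lifting property `chainLifting` are proved
together, by induction on the length: each one uses the other for shorter elements. -/
theorem chainLE_of_sublist {n : ℕ} (hL : ∀ v, ℓ v < n → cs.ChainLifting v) {ω ω' : List B}
    (hω : cs.IsReduced ω) (hn : ω.length ≤ n) (h : ω' <+ ω) : cs.ChainLE (π ω') (π ω) := by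
  induction ω generalizing ω' with
  | nil => rw [sublist_nil.mp h]; exact .refl
  | cons j ω₀ ih =>
    have hω₀ : cs.IsReduced ω₀ := by simpa using hω.drop 1
    have hn₀ : ω₀.length < n := hn
    have hasc : ¬cs.IsLeftDescent (π ω₀) j := by
      rw [cs.not_isLeftDescent_iff, ← wordProd_cons, hω.eq, hω₀.eq, length_cons]
    rw [wordProd_cons]
    rcases sublist_cons_iff.mp h with h₀ | ⟨ω₁, rfl, h₁⟩
    · exact (ih hω₀ hn₀.le h₀).trans (cs.chainLE_simple_mul hasc)
    · rw [wordProd_cons]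
      exact (hL _ (hω₀.eq ▸ hn₀) _ j (ih hω₀ hn₀.le h₁)).1 hasc

theorem chainLifting_of_forall_lt {v : W} (ih : ∀ w, ℓ w < ℓ v → cs.ChainLifting w) :
    cs.ChainLifting v := by
  intro u i huv
  constructor
  · intro hv
    rcases Relation.ReflTransGen.cases_tail huv with rfl | ⟨v₁, hu, hstep⟩
    · exact .refl
    · have hlt : ℓ v₁ < ℓ v := by obtain ⟨t, -, rfl, h⟩ := hstep; exact h
      by_cases hv₁ : cs.IsLeftDescent v₁ i
      · exact ((ih v₁ hlt u i hu).2 hv₁).tail hstep |>.trans (cs.chainLE_simple_mul hv)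
      · exact ((ih v₁ hlt u i hu).1 hv₁).tail (hstep.simple_mul hv)
  · intro hv
    obtain ⟨κ, hκ, hκv⟩ := cs.exists_isReduced_cons_of_isLeftDescent hv
    have hlen : κ.length < ℓ v := by
      have := hκ.eq
      rw [wordProd_cons, hκv, cs.simple_mul_simple_cancel_left, length_cons] at this
      omega
    have hsv : ¬cs.IsLeftDescent (s i * v) i := cs.isLeftDescent_iff_not_isLeftDescent_mul.mp hv
    have hsub {ω' : List B} (h : ω' <+ κ) : cs.ChainLE (π ω') (s i * v) := by
      rw [← hκv]
      exact cs.chainLE_of_sublist (fun w hw => ih w (hw.trans hlen)) (by simpa using hκ.drop 1)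
        le_rfl h
    obtain ⟨ω', hω', rfl⟩ := huv.exists_sublist (ω := i :: κ)
      (by rw [wordProd_cons, hκv, cs.simple_mul_simple_cancel_left])
    rcases sublist_cons_iff.mp hω' with h | ⟨ω₁, rfl, h⟩
    · have := (ih _ hv _ i (hsub h)).1 hsv
      rwa [cs.simple_mul_simple_cancel_left] at this
    · have hstep := cs.chainLE_simple_mul hsv
      rw [cs.simple_mul_simple_cancel_left] at hstep
      rw [wordProd_cons, cs.simple_mul_simple_cancel_left]
      exact (hsub h).trans hstep

theorem chainLifting (v : W) : cs.ChainLifting v := by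
  induction v using (measure cs.length).wf.induction with
  | _ v ih => exact cs.chainLifting_of_forall_lt ih

theorem bruhatLE_iff_chainLE {u v : W} : BruhatLE cs u v ↔ cs.ChainLE u v := by
  constructor
  · rintro ⟨ω, hω, rfl, ω', h, rfl⟩
    exact cs.chainLE_of_sublist (fun v _ => cs.chainLifting v) hω le_rfl h
  · intro h
    obtain ⟨ω, hω, rfl⟩ := cs.exists_isReduced v
    obtain ⟨ω', h', rfl⟩ := h.exists_sublist rfl
    exact ⟨ω, hω, rfl, ω', h', rfl⟩

theorem bruhatLE_simple_mul {w : W} {i : B} (hw : ¬cs.IsLeftDescent w i) :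
    BruhatLE cs w (s i * w) :=
  cs.bruhatLE_iff_chainLE.mpr (cs.chainLE_simple_mul hw)

theorem simple_mul_bruhatLE {w : W} {i : B} (hw : cs.IsLeftDescent w i) :
    BruhatLE cs (s i * w) w := by
  simpa [cs.simple_mul_simple_cancel_left] using
    cs.bruhatLE_simple_mul (cs.isLeftDescent_iff_not_isLeftDescent_mul.mp hw)

end CoxeterSystem

namespace BruhatLE

open CoxeterSystem List

variable {cs : CoxeterSystem M W} {u v w : W} {i : B}

local prefix:100 "s" => cs.simple
local prefix:100 "π" => cs.wordProd
local prefix:100 "ℓ" => cs.length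

theorem of_sublist {ω ω' : List B} (hω : cs.IsReduced ω) (h : ω' <+ ω) :
    BruhatLE cs (π ω') (π ω) :=
  ⟨ω, hω, rfl, ω', h, rfl⟩

protected theorem refl (cs : CoxeterSystem M W) (w : W) : BruhatLE cs w w := by
  obtain ⟨ω, hω, rfl⟩ := cs.exists_isReduced w
  exact of_sublist hω (Sublist.refl ω)

protected theorem trans (h₁ : BruhatLE cs u v) (h₂ : BruhatLE cs v w) : BruhatLE cs u w :=
  cs.bruhatLE_iff_chainLE.mpr
    ((cs.bruhatLE_iff_chainLE.mp h₁).trans (cs.bruhatLE_iff_chainLE.mp h₂))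

theorem exists_sublist (h : BruhatLE cs u v) {ω : List B} (hω : π ω = v) :
    ∃ ω', ω' <+ ω ∧ π ω' = u :=
  (cs.bruhatLE_iff_chainLE.mp h).exists_sublist hω

theorem length_le (h : BruhatLE cs u v) : ℓ u ≤ ℓ v := by
  obtain ⟨ω, hω, rfl, ω', h, rfl⟩ := h
  exact (cs.length_wordProd_le ω').trans (hω.eq ▸ h.length_le)

theorem eq_of_length_le (h : BruhatLE cs u v) (hl : ℓ v ≤ ℓ u) : u = v := by
  obtain ⟨ω, hω, rfl, ω', h, rfl⟩ := h
  rw [h.eq_of_length_le (hω.eq ▸ hl.trans (cs.length_wordProd_le ω'))]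

theorem eq_one (h : BruhatLE cs u 1) : u = 1 :=
  h.eq_of_length_le (by simp)

theorem inv (h : BruhatLE cs u v) : BruhatLE cs u⁻¹ v⁻¹ := by
  obtain ⟨ω, hω, rfl, ω', h, rfl⟩ := h
  simpa using of_sublist hω.reverse h.reverse

theorem le_or_simple_mul_le (h : BruhatLE cs u (s i * v)) :
    BruhatLE cs u v ∨ BruhatLE cs (s i * u) v := by
  obtain ⟨κ, hκ, rfl⟩ := cs.exists_isReduced v
  obtain ⟨ω', hω', rfl⟩ := h.exists_sublist (cs.wordProd_cons i κ)
  rcases sublist_cons_iff.mp hω' with hsub | ⟨ω₁, rfl, hsub⟩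
  · exact .inl (of_sublist hκ hsub)
  · rw [wordProd_cons, cs.simple_mul_simple_cancel_left]
    exact .inr (of_sublist hκ hsub)

theorem simple_mul_le_simple_mul (h : BruhatLE cs u v) (hv : ¬cs.IsLeftDescent v i) :
    BruhatLE cs (s i * u) (s i * v) := by
  obtain ⟨κ, hκ, rfl⟩ := cs.exists_isReduced v
  obtain ⟨ω', hω', rfl⟩ := h.exists_sublist rfl
  have hiκ : cs.IsReduced (i :: κ) := by
    rw [CoxeterSystem.IsReduced, wordProd_cons, cs.not_isLeftDescent_iff.mp hv, hκ.eq, length_cons]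
  simpa only [wordProd_cons] using of_sublist hiκ (hω'.cons_cons i)

theorem le_simple_mul (h : BruhatLE cs u v) (hu : ¬cs.IsLeftDescent u i) :
    BruhatLE cs u (s i * v) := by
  rw [← cs.simple_mul_simple_cancel_left (w := v) i] at h
  exact h.le_or_simple_mul_le.elim id (cs.bruhatLE_simple_mul hu).trans

theorem simple_mul_le_simple_mul_of_isLeftDescent (h : BruhatLE cs u v)
    (hu : cs.IsLeftDescent u i) : BruhatLE cs (s i * u) (s i * v) := by
  rw [← cs.simple_mul_simple_cancel_left (w := v) i] at h
  exact h.le_or_simple_mul_le.elim (cs.simple_mul_bruhatLE hu).trans id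

theorem simple_mul_le (h : BruhatLE cs u v) (hv : cs.IsLeftDescent v i) :
    BruhatLE cs (s i * u) v := by
  by_cases hu : cs.IsLeftDescent u i
  · exact (cs.simple_mul_bruhatLE hu).trans h
  · simpa [cs.simple_mul_simple_cancel_left] using (h.le_simple_mul hu).simple_mul_le_simple_mul
      (cs.isLeftDescent_iff_not_isLeftDescent_mul.mp hv)

end BruhatLE

namespace IsStdParabolic

variable {cs : CoxeterSystem M W} {P : Subgroup W}

@[elab_as_elim]
theorem induction_left (hP : IsStdParabolic cs P) {p : (c : W) → c ∈ P → Prop}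
    (one : p 1 (one_mem _))
    (mul : ∀ i (hi : cs.simple i ∈ P) c hc, p c hc → p (cs.simple i * c) (mul_mem hi hc))
    {c : W} (hc : c ∈ P) : p c hc := by
  obtain ⟨X, rfl⟩ := hP
  induction hc using Subgroup.closure_induction_left with
  | one => exact one
  | mul_left _ hx c hc h =>
    obtain ⟨i, hi, rfl⟩ := hx
    exact mul i (Subgroup.subset_closure ⟨i, hi, rfl⟩) c hc h
  | inv_mul_cancel _ hx c hc h =>
    obtain ⟨i, hi, rfl⟩ := hx
    simp_rw [cs.inv_simple]
    exact mul i (Subgroup.subset_closure ⟨i, hi, rfl⟩) c hc h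

end IsStdParabolic

namespace CoxeterSystem

open List

variable (cs : CoxeterSystem M W) {P : Subgroup W}

local prefix:100 "s" => cs.simple
local prefix:100 "π" => cs.wordProd
local prefix:100 "ℓ" => cs.length

theorem bruhatLE_mul_of_forall_not_isLeftDescent (hP : IsStdParabolic cs P) {w v c : W}
    (hw : ∀ i, s i ∈ P → ¬cs.IsLeftDescent w i) (hc : c ∈ P) (h : BruhatLE cs w v) :
    BruhatLE cs w (c * v) := by
  induction hc using hP.induction_left with
  | one => rwa [one_mul]
  | mul i hi c _ ih => rw [mul_assoc]; exact ih.le_simple_mul (hw i hi)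

theorem bruhatLE_mul_of_forall_not_isRightDescent (hP : IsStdParabolic cs P) {w v c : W}
    (hw : ∀ i, s i ∈ P → ¬cs.IsRightDescent w i) (hc : c ∈ P) (h : BruhatLE cs w v) :
    BruhatLE cs w (v * c) := by
  have := cs.bruhatLE_mul_of_forall_not_isLeftDescent hP
    (fun i hi => cs.isLeftDescent_inv_iff.not.mpr (hw i hi)) (inv_mem hc) h.inv
  simpa using this.inv

theorem exists_mul_left_bruhatLE_mul_left (hP : IsStdParabolic cs P) {x y c : W} (hc : c ∈ P)
    (h : BruhatLE cs x y) : ∃ c' ∈ P, BruhatLE cs (c' * x) (c * y) := by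
  induction hc using hP.induction_left with
  | one => exact ⟨1, one_mem _, by rwa [one_mul, one_mul]⟩
  | mul i hi c _ ih =>
    obtain ⟨c', hc', hle⟩ := ih
    rw [mul_assoc]
    by_cases hx : cs.IsLeftDescent (c' * x) i
    · refine ⟨s i * c', mul_mem hi hc', ?_⟩
      rw [mul_assoc]
      exact hle.simple_mul_le_simple_mul_of_isLeftDescent hx
    · exact ⟨c', hc', hle.le_simple_mul hx⟩

theorem exists_mul_right_bruhatLE_mul_right (hP : IsStdParabolic cs P) {x y c : W} (hc : c ∈ P)
    (h : BruhatLE cs x y) : ∃ c' ∈ P, BruhatLE cs (x * c') (y * c) := by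
  obtain ⟨c', hc', hle⟩ := cs.exists_mul_left_bruhatLE_mul_left hP (inv_mem hc) h.inv
  exact ⟨c'⁻¹, inv_mem hc', by simpa using hle.inv⟩

theorem exists_eq_mul_left_of_bruhatLE (hP : IsStdParabolic cs P) {y w c : W} (hc : c ∈ P)
    (h : BruhatLE cs y (c * w)) : ∃ c' ∈ P, ∃ x, BruhatLE cs x w ∧ y = c' * x := by
  induction hc using hP.induction_left generalizing y with
  | one => exact ⟨1, one_mem _, y, by rwa [one_mul] at h, (one_mul y).symm⟩
  | mul i hi c _ ih =>
    rw [mul_assoc] at h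
    rcases h.le_or_simple_mul_le with h | h
    · exact ih h
    · obtain ⟨c', hc', x, hx, hy⟩ := ih h
      refine ⟨s i * c', mul_mem hi hc', x, hx, ?_⟩
      rw [mul_assoc, ← hy, cs.simple_mul_simple_cancel_left]

theorem exists_eq_mul_right_of_bruhatLE (hP : IsStdParabolic cs P) {y w c : W} (hc : c ∈ P)
    (h : BruhatLE cs y (w * c)) : ∃ x, BruhatLE cs x w ∧ ∃ c' ∈ P, y = x * c' := by
  obtain ⟨c', hc', x, hx, hy⟩ :=
    cs.exists_eq_mul_left_of_bruhatLE hP (inv_mem hc) (by simpa using h.inv)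
  exact ⟨x⁻¹, by simpa using hx.inv, c'⁻¹, inv_mem hc', by rw [← mul_inv_rev, ← hy, inv_inv]⟩

theorem exists_isBrMin_dblCoset {W₁ W₂ : Subgroup W} (h₁ : IsStdParabolic cs W₁)
    (h₂ : IsStdParabolic cs W₂) (w : W) : ∃ d, IsBrMin cs (dblCoset W₁ W₂ w) d := by
  obtain ⟨d, ⟨a, ha, b, hb, rfl⟩, hmin⟩ := exists_minimalFor_of_wellFoundedLT
    (· ∈ dblCoset W₁ W₂ w) cs.length ⟨w, 1, one_mem _, 1, one_mem _, by simp⟩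
  have hleft (i) (hi : s i ∈ W₁) : ¬cs.IsLeftDescent (a * w * b) i := fun hdesc =>
    hdesc.not_ge (hmin ⟨s i * a, mul_mem hi ha, b, hb, by group⟩ hdesc.le)
  have hright (i) (hi : s i ∈ W₂) : ¬cs.IsRightDescent (a * w * b) i := fun hdesc =>
    hdesc.not_ge (hmin ⟨a, ha, b * s i, mul_mem hb hi, by group⟩ hdesc.le)
  refine ⟨a * w * b, ⟨a, ha, b, hb, rfl⟩, ?_⟩
  rintro _ ⟨a', ha', b', hb', rfl⟩
  have h := cs.bruhatLE_mul_of_forall_not_isRightDescent h₂ hright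
    (mul_mem (inv_mem hb) hb') (BruhatLE.refl cs (a * w * b))
  have := cs.bruhatLE_mul_of_forall_not_isLeftDescent h₁ hleft (mul_mem ha' (inv_mem ha)) h
  convert this using 1
  group

theorem exists_mem_dblCoset_bruhatLE {W₁ W₂ : Subgroup W} {x y z : W}
    (h₁ : IsStdParabolic cs W₁) (h₂ : IsStdParabolic cs W₂) (h : BruhatLE cs x y)
    (hz : z ∈ dblCoset W₁ W₂ y) : ∃ z' ∈ dblCoset W₁ W₂ x, BruhatLE cs z' z := by
  obtain ⟨a, ha, b, hb, rfl⟩ := hz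
  obtain ⟨b', hb', hle⟩ := cs.exists_mul_right_bruhatLE_mul_right h₂ hb h
  obtain ⟨a', ha', hle'⟩ := cs.exists_mul_left_bruhatLE_mul_left h₁ ha hle
  exact ⟨a' * x * b', ⟨a', ha', b', hb', rfl⟩, by simpa only [mul_assoc] using hle'⟩

theorem exists_forall_bruhatLE_mul (u ψ : W) :
    ∃ x, BruhatLE cs x u ∧ ∀ y, BruhatLE cs y u → BruhatLE cs (x * ψ) (y * ψ) := by
  obtain ⟨ω, hω, rfl⟩ := cs.exists_isReduced u
  induction ω with
  | nil =>
    refine ⟨1, BruhatLE.refl cs _, fun y hy => ?_⟩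
    rw [hy.eq_one]
    exact BruhatLE.refl cs _
  | cons j ω ih =>
    have hω' : cs.IsReduced ω := by simpa using hω.drop 1
    have hasc : ¬cs.IsLeftDescent (π ω) j := by
      rw [cs.not_isLeftDescent_iff, ← wordProd_cons, hω.eq, hω'.eq, length_cons]
    obtain ⟨x, hx, hmin⟩ := ih hω'
    rw [wordProd_cons]
    by_cases hxψ : cs.IsLeftDescent (x * ψ) j
    · refine ⟨s j * x, hx.simple_mul_le_simple_mul hasc, fun y hy => ?_⟩
      rw [mul_assoc]
      rcases hy.le_or_simple_mul_le with hy | hy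
      · exact (cs.simple_mul_bruhatLE hxψ).trans (hmin y hy)
      · simpa [mul_assoc, cs.simple_mul_simple_cancel_left] using
          (hmin _ hy).simple_mul_le_simple_mul_of_isLeftDescent hxψ
    · refine ⟨x, hx.trans (cs.bruhatLE_simple_mul hasc), fun y hy => ?_⟩
      rcases hy.le_or_simple_mul_le with hy | hy
      · exact hmin y hy
      · simpa [mul_assoc, cs.simple_mul_simple_cancel_left] using (hmin _ hy).le_simple_mul hxψ

theorem exists_isBrMin_KKset {W₁ W₂ : Subgroup W} (h₁ : IsStdParabolic cs W₁)
    (h₂ : IsStdParabolic cs W₂) (τ ψ : W) : ∃ m, IsBrMin cs (KKset cs W₁ W₂ τ ψ) m := by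
  obtain ⟨x, hx, hmin⟩ := cs.exists_forall_bruhatLE_mul τ⁻¹ ψ
  obtain ⟨_, ⟨a, ha, b, hb, rfl⟩, hd⟩ := cs.exists_isBrMin_dblCoset h₁ h₂ (x * ψ)
  refine ⟨a * (x * ψ) * b, ⟨a, ha, x, hx, b, hb, by simp only [mul_assoc]⟩, ?_⟩
  rintro _ ⟨a', ha', y, hy, b', hb', rfl⟩
  obtain ⟨z, hz, hle⟩ := cs.exists_mem_dblCoset_bruhatLE h₁ h₂ (hmin y hy)
    (z := a' * y * ψ * b') ⟨a', ha', b', hb', by simp only [mul_assoc]⟩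
  exact (hd z hz).trans hle

theorem KKset_subset_KKset_simple_mul {W₁ W₂ : Subgroup W} {τ : W} {i : B}
    (h : ∀ x, BruhatLE cs x τ⁻¹ → ∃ a ∈ W₁, ∃ y, BruhatLE cs y τ⁻¹ ∧ x * s i = a * y)
    (φ : W) : KKset cs W₁ W₂ τ φ ⊆ KKset cs W₁ W₂ τ (s i * φ) := by
  rintro _ ⟨a, ha, x, hx, b, hb, rfl⟩
  obtain ⟨a', ha', y, hy, hxy⟩ := h x hx
  refine ⟨a * a', mul_mem ha ha', y, hy, b, hb, ?_⟩
  rw [← cs.simple_mul_simple_cancel_right (w := x) i, hxy]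
  simp only [mul_assoc]

theorem isLeftDescent_or_simple_mul_mem_lCoset {W₁ : Subgroup W} {τ m₁ m₂ : W} {i : B}
    (hm₁ : IsBrMin cs (lCoset W₁ (s i * τ)) m₁) (hm₂ : IsBrMin cs (lCoset W₁ τ) m₂)
    (h : BruhatLE cs m₁ m₂) : cs.IsLeftDescent m₂ i ∨ s i * m₂ ∈ lCoset W₁ τ := by
  refine or_iff_not_imp_left.mpr fun hasc => ?_
  obtain ⟨b₁, hb₁, hm₁τ⟩ := hm₁.1
  have hsm₁ : s i * m₁ = τ * b₁ := by rw [hm₁τ, mul_assoc, cs.simple_mul_simple_cancel_left]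
  by_cases heq : m₁ = m₂
  · exact ⟨b₁, hb₁, heq ▸ hsm₁⟩
  exfalso
  have hlt : ℓ m₁ < ℓ m₂ := lt_of_le_of_ne h.length_le fun hl => heq (h.eq_of_length_le hl.ge)
  have h₂ : BruhatLE cs m₂ (s i * m₁) := hm₂.2 _ ⟨b₁, hb₁, hsm₁⟩
  have hm₂m₁ : m₂ = s i * m₁ := h₂.eq_of_length_le (by have := cs.length_simple_mul m₁ i; omega)
  subst hm₂m₁
  rw [cs.not_isLeftDescent_iff, cs.simple_mul_simple_cancel_left] at hasc
  omega

theorem exists_simple_mul_eq_mul {W₁ : Subgroup W} (hW₁ : IsStdParabolic cs W₁)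
    {τ m₁ m₂ : W} {i : B} (hm₁ : IsBrMin cs (lCoset W₁ (s i * τ)) m₁)
    (hm₂ : IsBrMin cs (lCoset W₁ τ) m₂) (h : BruhatLE cs m₁ m₂) {g : W}
    (hg : BruhatLE cs g τ) : ∃ x, BruhatLE cs x τ ∧ ∃ c ∈ W₁, s i * g = x * c := by
  obtain ⟨b, hb, hm₂τ⟩ := hm₂.1
  have hm₂le : BruhatLE cs m₂ τ := hm₂.2 τ ⟨1, one_mem _, (mul_one τ).symm⟩
  rw [show τ = m₂ * b⁻¹ by rw [hm₂τ, mul_inv_cancel_right]] at hg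
  obtain ⟨x, hx, c, hc, rfl⟩ := cs.exists_eq_mul_right_of_bruhatLE hW₁ (inv_mem hb) hg
  by_cases hdesc : cs.IsLeftDescent m₂ i
  · exact ⟨s i * x, (hx.simple_mul_le hdesc).trans hm₂le, c, hc, (mul_assoc _ _ _).symm⟩
  · obtain ⟨b', hb', hsm₂⟩ := (cs.isLeftDescent_or_simple_mul_mem_lCoset hm₁ hm₂ h).resolve_left
      hdesc
    have hsx := hx.simple_mul_le_simple_mul hdesc
    rw [hsm₂] at hsx
    obtain ⟨x', hx', c', hc', hsx'⟩ := cs.exists_eq_mul_right_of_bruhatLE hW₁ hb' hsx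
    exact ⟨x', hx', c' * c, mul_mem hc' hc, by rw [← mul_assoc, hsx', mul_assoc]⟩

theorem exists_mul_simple_eq_mul {W₁ : Subgroup W} (hW₁ : IsStdParabolic cs W₁)
    {τ m₁ m₂ : W} {i : B} (hm₁ : IsBrMin cs (lCoset W₁ (s i * τ)) m₁)
    (hm₂ : IsBrMin cs (lCoset W₁ τ) m₂) (h : BruhatLE cs m₁ m₂) {x : W}
    (hx : BruhatLE cs x τ⁻¹) : ∃ a ∈ W₁, ∃ y, BruhatLE cs y τ⁻¹ ∧ x * s i = a * y := by
  obtain ⟨y, hy, c, hc, hyc⟩ :=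
    cs.exists_simple_mul_eq_mul hW₁ hm₁ hm₂ h (g := x⁻¹) (by simpa using hx.inv)
  refine ⟨c⁻¹, inv_mem hc, y⁻¹, hy.inv, ?_⟩
  rw [← mul_inv_rev, ← hyc, mul_inv_rev, inv_inv, cs.inv_simple]

end CoxeterSystem

theorem stmt_17_general (cs : CoxeterSystem M W) (W₁ W₂ : Subgroup W)
    (h₁ : IsStdParabolic cs W₁) (h₂ : IsStdParabolic cs W₂) (τ φ : W) (i : B)
    (hτ : ∃ m₁ m₂ : W,
      IsBrMin cs (lCoset W₁ (cs.simple i * τ)) m₁ ∧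
      IsBrMin cs (lCoset W₁ τ) m₂ ∧ BruhatLE cs m₁ m₂) :
    ∃ m : W,
      IsBrMin cs (KKset cs W₁ W₂ τ φ) m ∧
      IsBrMin cs (KKset cs W₁ W₂ τ (cs.simple i * φ)) m := by
  obtain ⟨m₁, m₂, hm₁, hm₂, h⟩ := hτ
  have hstable := fun x (hx : BruhatLE cs x τ⁻¹) => cs.exists_mul_simple_eq_mul h₁ hm₁ hm₂ h hx
  have hK : KKset cs W₁ W₂ τ φ = KKset cs W₁ W₂ τ (cs.simple i * φ) := by
    refine (cs.KKset_subset_KKset_simple_mul hstable φ).antisymm ?_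
    simpa only [cs.simple_mul_simple_cancel_left] using
      cs.KKset_subset_KKset_simple_mul hstable (cs.simple i * φ)
  obtain ⟨m, hm⟩ := cs.exists_isBrMin_KKset h₁ h₂ τ φ
  exact ⟨m, hm, hK ▸ hm⟩

/-- Let `τ, φ ∈ W`, `W₁, W₂` standard parabolic subgroups, and `s` a simple reflection
such that `sφ < φ` in the Bruhat order and `brmin(sτW₁) ≤ brmin(τW₁)`.  Then the unique
minimal element of `W₁ I(τ⁻¹) φ W₂` equals the unique minimal element of
`W₁ I(τ⁻¹) sφ W₂` (both exist). -/
theorem stmt_17 (cs : CoxeterSystem M W) (W₁ W₂ : Subgroup W)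
    (h₁ : IsStdParabolic cs W₁) (h₂ : IsStdParabolic cs W₂) (τ φ : W) (i : B)
    (hφ : BruhatLT cs (cs.simple i * φ) φ)
    (hτ : ∃ m₁ m₂ : W,
      IsBrMin cs (lCoset W₁ (cs.simple i * τ)) m₁ ∧
      IsBrMin cs (lCoset W₁ τ) m₂ ∧ BruhatLE cs m₁ m₂) :
    ∃ m : W,
      IsBrMin cs (KKset cs W₁ W₂ τ φ) m ∧
      IsBrMin cs (KKset cs W₁ W₂ τ (cs.simple i * φ)) m :=
  stmt_17_general cs W₁ W₂ h₁ h₂ τ φ i hτ
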